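/- arXiv:2109.08212 — 2 statements merged into one kernel-verified Lean document; each statement's English description precedes it below -/
import Mathlib

section
/- Let φ be a structural set in ℝ_{0,m} with m even. Then for every k-grade multivector [a]_k, Ψⱼ^{φ,φ}([a]_k) = Ψ_{m-j}^{φ,φ}([a]_k) if k is even, and Ψⱼ^{φ,φ}([a]_k) = -Ψ_{m-j}^{φ,φ}([a]_k) if k is odd. -/
open CliffordAlgebra

noncomputable section

/-- The quadratic form of `ℝ_{0,m}`: negative definite on `ℝ^m`. -/
abbrev Qf (m : ℕ) : QuadraticForm ℝ (Fin m → ℝ) :=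
  QuadraticMap.weightedSumSquares ℝ (fun _ : Fin m => (-1 : ℝ))

/-- The real Clifford algebra `ℝ_{0,m}`. -/
abbrev Cl (m : ℕ) := CliffordAlgebra (Qf m)

/-- A structural set: an orthonormal basis `ψ¹,…,ψᵐ` of `ℝᵐ`. -/
def IsStructuralSet {m : ℕ} (ψ : Fin m → (Fin m → ℝ)) : Prop :=
  ∀ i j, (∑ t, ψ i t * ψ j t) = if i = j then (1 : ℝ) else 0

/-- The ordered product `ψ_A = ψ^{j₁} ⋯ ψ^{j_k}` for `A = {j₁ < ⋯ < j_k}`. -/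
def prodS {m : ℕ} (ψ : Fin m → (Fin m → ℝ)) (A : Finset (Fin m)) : Cl m :=
  ((A.sort (· ≤ ·)).map (fun i => ι (Qf m) (ψ i))).prod

/-- The operator `Ψ_k^{φ,ψ}(a) = Σ_{|A|=k} φ_A a ψ̂_A`. -/
def PsiK {m : ℕ} (φ ψ : Fin m → (Fin m → ℝ)) (k : ℕ) (a : Cl m) : Cl m :=
  ∑ A ∈ Finset.univ.filter (fun A : Finset (Fin m) => A.card = k),
    prodS φ A * a * reverse (prodS ψ A)

/-- `Ψ₊ = Σ_{k even} Ψ_k`. -/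
def PsiPlus {m : ℕ} (φ ψ : Fin m → (Fin m → ℝ)) (a : Cl m) : Cl m :=
  ∑ k ∈ (Finset.range (m + 1)).filter (fun k => Even k), PsiK φ ψ k a

/-- `Ψ₋ = Σ_{k odd} Ψ_k`. -/
def PsiMinus {m : ℕ} (φ ψ : Fin m → (Fin m → ℝ)) (a : Cl m) : Cl m :=
  ∑ k ∈ (Finset.range (m + 1)).filter (fun k => Odd k), PsiK φ ψ k a

/-- `Ψ₁^{φ,ψ}(a) = Σⱼ φʲ a ψʲ`. -/
def Psi1 {m : ℕ} (φ ψ : Fin m → (Fin m → ℝ)) (a : Cl m) : Cl m :=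
  ∑ j, ι (Qf m) (φ j) * a * ι (Qf m) (ψ j)

/-- The standard basis of `ℝᵐ`. -/
def stdB {m : ℕ} (i : Fin m) : Fin m → ℝ := Pi.single i 1

/-- The basis multivector `e_A`. -/
def eA {m : ℕ} (A : Finset (Fin m)) : Cl m := prodS stdB A

/-- The element with coefficients `c` in the multivector basis. -/
def toCl {m : ℕ} (c : Finset (Fin m) → ℝ) : Cl m := ∑ A, c A • eA A

/-- The space `ℝ_{0,m}^{(k)}` of `k`-grade multivectors. -/
def gradeK (m k : ℕ) : Submodule ℝ (Cl m) :=
  Submodule.span ℝ {x | ∃ A : Finset (Fin m), A.card = k ∧ x = eA A}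

/-- Coefficient functions of `ℝ_{0,m}`-valued maps. -/
abbrev Coef (m : ℕ) := Finset (Fin m) → ℝ

/-- The coefficients of the even part `f₊`. -/
def cEven {m : ℕ} (c : Coef m) : Coef m := fun A => if Even A.card then c A else 0

/-- The coefficients of the odd part `f₋`. -/
def cOdd {m : ℕ} (c : Coef m) : Coef m := fun A => if Odd A.card then c A else 0

/-- The even part of a Clifford number. -/
def evenPart {m : ℕ} (a : Cl m) : Cl m :=
  (DirectSum.decompose (evenOdd (Qf m)) a 0 : evenOdd (Qf m) 0)

/-- The odd part of a Clifford number. -/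
def oddPart {m : ℕ} (a : Cl m) : Cl m :=
  (DirectSum.decompose (evenOdd (Qf m)) a 1 : evenOdd (Qf m) 1)

/-- Partial derivative `∂F/∂xᵢ` of a coefficient function. -/
def pd {m : ℕ} (i : Fin m) (F : (Fin m → ℝ) → Coef m) : (Fin m → ℝ) → Coef m :=
  fun x => fderiv ℝ F x (Pi.single i 1)

/-- The sandwich operator `φ∂[f]ψ∂ = Σᵢⱼ φⁱ (∂²f/∂xᵢ∂xⱼ) ψʲ` for `f = Σ_A F_A e_A`. -/
def sandwichD {m : ℕ} (φ ψ : Fin m → (Fin m → ℝ)) (F : (Fin m → ℝ) → Coef m)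
    (x : Fin m → ℝ) : Cl m :=
  ∑ i, ∑ j, ι (Qf m) (φ i) * toCl (pd i (pd j F) x) * ι (Qf m) (ψ j)

/-- The operator `φ∂[ψ∂[f]] = Σᵢⱼ φⁱ ψʲ ∂²f/∂xᵢ∂xⱼ`. -/
def ddD {m : ℕ} (φ ψ : Fin m → (Fin m → ℝ)) (F : (Fin m → ℝ) → Coef m)
    (x : Fin m → ℝ) : Cl m :=
  ∑ i, ∑ j, ι (Qf m) (φ i) * (ι (Qf m) (ψ j) * toCl (pd i (pd j F) x))

/-- The componentwise Laplacian `Δf = Σᵢ ∂²f/∂xᵢ²`. -/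
def lapD {m : ℕ} (F : (Fin m → ℝ) → Coef m) (x : Fin m → ℝ) : Cl m :=
  ∑ i, toCl (pd i (pd i F) x)

/-!
Write `ω = φ_{1⋯m}` and `Ad_x a = x a x̃`. The generators `φⁱ` anticommute and square to `-1`,
so up to sign `φ_A φ_{Aᶜ} = ω`, `φ̃_A = φ_A` and `φ_A φ̃_A = 1`; hence `Ad_{φ_A}` is an involution
and `Ad_{φ_{Aᶜ}} = Ad_{φ_A} ∘ Ad_ω`. For even `m`, `ω` anticommutes with every vector and
`ω ω̃ = 1`, so `Ad_ω` is the grade involution `a ↦ â`, which is `(-1)ᵏ` on `k`-vectors.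
Summing over `|A| = j` gives `Ψ_{m-j}(a) = Ψ_j(â)`.
-/

section Anticommuting

variable {R A κ : Type*} [CommRing R] [Ring A] [Algebra R A] {e : κ → A}

theorem prod_map_eq_neg_one_pow_smul_of_perm
    (he : Pairwise fun i j => e i * e j = -(e j * e i)) {l₁ l₂ : List κ} (h : l₁.Perm l₂)
    (hn : l₁.Nodup) : ∃ n : ℕ, (l₁.map e).prod = (-1 : R) ^ n • (l₂.map e).prod := by
  induction h with
  | nil => exact ⟨0, by simp⟩
  | cons x _ ih =>
    obtain ⟨n, hprod⟩ := ih (List.nodup_cons.mp hn).2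
    exact ⟨n, by simp [hprod]⟩
  | swap x y l =>
    have hxy : y ≠ x := fun h => (List.nodup_cons.mp hn).1 (h ▸ List.mem_cons_self)
    refine ⟨1, ?_⟩
    simp only [List.map_cons, List.prod_cons, ← mul_assoc, he hxy]
    simp
  | trans h₁ _ ih₁ ih₂ =>
    obtain ⟨n₁, e₁⟩ := ih₁ hn
    obtain ⟨n₂, e₂⟩ := ih₂ (h₁.nodup hn)
    exact ⟨n₁ + n₂, by rw [e₁, e₂, smul_smul, pow_add]⟩

theorem mul_prod_map_of_notMem_of_anticomm
    (he : Pairwise fun i j => e i * e j = -(e j * e i)) {i : κ} :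
    ∀ {l : List κ}, i ∉ l →
      e i * (l.map e).prod = (-1 : R) ^ l.length • ((l.map e).prod * e i)
  | [], _ => by simp
  | x :: l, hi => by
    have hix : i ≠ x := fun h => hi (h ▸ List.mem_cons_self)
    have ih := mul_prod_map_of_notMem_of_anticomm he (fun h => hi (List.mem_cons_of_mem x h))
    rw [List.map_cons, List.prod_cons, ← mul_assoc, he hix, neg_mul, mul_assoc, ih,
      mul_smul_comm, List.length_cons, pow_succ, mul_neg_one, neg_smul, ← mul_assoc]

theorem mul_prod_map_of_mem_of_anticomm
    (he : Pairwise fun i j => e i * e j = -(e j * e i)) {i : κ} {l : List κ} (hl : l.Nodup)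
    (hi : i ∈ l) :
    e i * (l.map e).prod = (-1 : R) ^ (l.length - 1) • ((l.map e).prod * e i) := by
  classical
  obtain ⟨n, hperm⟩ :=
    prod_map_eq_neg_one_pow_smul_of_perm (R := R) he (List.perm_cons_erase hi) hl
  have hcomm := mul_prod_map_of_notMem_of_anticomm (R := R) he (hl.not_mem_erase (a := i))
  rw [List.length_erase_of_mem hi] at hcomm
  rw [hperm, List.map_cons, List.prod_cons, mul_smul_comm, smul_mul_assoc, mul_assoc (e i) _ (e i),
    hcomm, mul_smul_comm, smul_comm]

theorem prod_map_mul_prod_map_reverse_of_mul_self (hsq : ∀ i, e i * e i = -1) :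
    ∀ l : List κ, (l.map e).prod * (l.reverse.map e).prod = (-1 : R) ^ l.length • 1
  | [] => by simp
  | x :: l => by
    calc ((x :: l).map e).prod * ((x :: l).reverse.map e).prod
        = e x * ((l.map e).prod * (l.reverse.map e).prod) * e x := by
          simp [mul_assoc]
      _ = (-1 : R) ^ (x :: l).length • 1 := by
          rw [prod_map_mul_prod_map_reverse_of_mul_self hsq l, mul_smul_comm, smul_mul_assoc,
            mul_one, hsq, List.length_cons, pow_succ, mul_neg_one, neg_smul, smul_neg]

end Anticommuting

section Clifford

variable {R M : Type*} [CommRing R] [AddCommGroup M] [Module R M] {Q : QuadraticForm R M}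

def revConj (x : CliffordAlgebra Q) : CliffordAlgebra Q →ₗ[R] CliffordAlgebra Q :=
  LinearMap.mulLeft R x ∘ₗ LinearMap.mulRight R (reverse x)

theorem revConj_apply (x a : CliffordAlgebra Q) : revConj x a = x * a * reverse x :=
  (mul_assoc _ _ _).symm

theorem revConj_one (a : CliffordAlgebra Q) : revConj 1 a = a := by
  simp [revConj_apply]

theorem revConj_mul (x y a : CliffordAlgebra Q) :
    revConj (x * y) a = revConj x (revConj y a) := by
  simp only [revConj_apply, reverse.map_mul, mul_assoc]

theorem revConj_neg_one_pow_smul (n : ℕ) (x a : CliffordAlgebra Q) :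
    revConj ((-1 : R) ^ n • x) a = revConj x a := by
  rw [revConj_apply, revConj_apply, map_smul, smul_mul_assoc, smul_mul_assoc, mul_smul_comm,
    smul_smul, ← pow_add, Even.neg_one_pow ⟨n, rfl⟩, one_smul]

theorem mul_eq_involute_mul_of_forall_ι_anticomm {ω : CliffordAlgebra Q}
    (hω : ∀ v, ω * ι Q v = -(ι Q v * ω)) (x : CliffordAlgebra Q) : ω * x = involute x * ω := by
  induction x using CliffordAlgebra.induction with
  | algebraMap r => simp [Algebra.commutes]
  | ι v => simp [hω]
  | mul x y hx hy => rw [← mul_assoc, hx, mul_assoc, hy, map_mul, mul_assoc]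
  | add x y hx hy => rw [mul_add, hx, hy, map_add, add_mul]

theorem revConj_eq_involute_of_forall_ι_anticomm {ω : CliffordAlgebra Q}
    (hω : ∀ v, ω * ι Q v = -(ι Q v * ω)) (hω' : ω * reverse ω = 1) (a : CliffordAlgebra Q) :
    revConj ω a = involute a := by
  rw [revConj_apply, mul_eq_involute_mul_of_forall_ι_anticomm hω, mul_assoc, hω', mul_one]

end Clifford

theorem reverse_prodS {m : ℕ} (φ : Fin m → Fin m → ℝ) (A : Finset (Fin m)) :
    reverse (prodS φ A) = (((A.sort (· ≤ ·)).reverse.map fun i => ι (Qf m) (φ i))).prod := by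
  have h := reverse_prod_map_ι (Q := Qf m) ((A.sort (· ≤ ·)).map φ)
  simp only [List.map_map, Function.comp_def, ← List.map_reverse] at h
  exact h

theorem involute_of_mem_gradeK {m k : ℕ} {a : Cl m} (ha : a ∈ gradeK m k) :
    involute a = (-1 : ℝ) ^ k • a := by
  induction ha using Submodule.span_induction with
  | mem x hx =>
    obtain ⟨A, rfl, rfl⟩ := hx
    have h := involute_prod_map_ι (Q := Qf m) ((A.sort (· ≤ ·)).map stdB)
    simp only [List.map_map, Function.comp_def, List.length_map, Finset.length_sort] at h
    exact h
  | zero => simp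
  | add x y _ _ hx hy => rw [map_add, hx, hy, smul_add]
  | smul r x _ hx => rw [map_smul, hx, smul_comm]

namespace IsStructuralSet

variable {m : ℕ} {φ : Fin m → Fin m → ℝ} (hφ : IsStructuralSet φ)
include hφ

theorem span_eq_top : Submodule.span ℝ (Set.range φ) = ⊤ := by
  have hunit : IsUnit (Matrix.of φ) := by
    refine IsUnit.of_mul_eq_one (Matrix.of φ).transpose ?_
    ext i j
    simp [Matrix.mul_apply, Matrix.one_apply, hφ i j]
  exact (Matrix.linearIndependent_rows_of_isUnit hunit).span_eq_top_of_card_eq_finrank'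
    (by simp)

theorem ι_mul_ι_self (i : Fin m) :
    ι (Qf m) (φ i) * ι (Qf m) (φ i) = -1 := by
  have hQ : Qf m (φ i) = -1 := by
    simpa [QuadraticMap.weightedSumSquares_apply] using hφ i i
  rw [ι_sq_scalar, hQ, map_neg, map_one]

theorem ι_mul_ι_anticomm :
    Pairwise fun i j => ι (Qf m) (φ i) * ι (Qf m) (φ j) = -(ι (Qf m) (φ j) * ι (Qf m) (φ i)) := by
  intro i j hij
  have hpolar : QuadraticMap.polar (Qf m) (φ i) (φ j) = 0 := by
    have horth : ∑ t, φ i t * φ j t = 0 := by simpa [hij] using hφ i j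
    have hexpand : ∑ t, (φ i t + φ j t) * (φ i t + φ j t) =
        ∑ t, φ i t * φ i t + ∑ t, φ j t * φ j t + 2 * ∑ t, φ i t * φ j t := by
      rw [Finset.mul_sum, ← Finset.sum_add_distrib, ← Finset.sum_add_distrib]
      exact Finset.sum_congr rfl fun t _ => by ring
    simp only [QuadraticMap.polar, QuadraticMap.weightedSumSquares_apply, Pi.add_apply,
      smul_eq_mul, neg_one_mul, Finset.sum_neg_distrib, hexpand, horth]
    ring
  have h := ι_mul_ι_add_swap (Q := Qf m) (φ i) (φ j)
  rw [hpolar, map_zero] at h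
  exact eq_neg_of_add_eq_zero_left h

theorem reverse_prodS_eq_neg_one_pow_smul (A : Finset (Fin m)) :
    ∃ n : ℕ, reverse (prodS φ A) = (-1 : ℝ) ^ n • prodS φ A := by
  rw [reverse_prodS]
  exact prod_map_eq_neg_one_pow_smul_of_perm (R := ℝ) hφ.ι_mul_ι_anticomm (List.reverse_perm _)
    (List.nodup_reverse.mpr (Finset.sort_nodup _ _))

theorem prodS_mul_reverse_prodS (A : Finset (Fin m)) :
    prodS φ A * reverse (prodS φ A) = (-1 : ℝ) ^ A.card • 1 := by
  rw [reverse_prodS, prodS, prod_map_mul_prod_map_reverse_of_mul_self (R := ℝ) hφ.ι_mul_ι_self,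
    Finset.length_sort]

theorem prodS_mul_prodS_compl (A : Finset (Fin m)) :
    ∃ n : ℕ, prodS φ A * prodS φ Aᶜ = (-1 : ℝ) ^ n • prodS φ Finset.univ := by
  have hperm : (A.sort (· ≤ ·) ++ Aᶜ.sort (· ≤ ·)).Perm (Finset.univ.sort (· ≤ ·)) := by
    rw [← Multiset.coe_eq_coe, ← Multiset.coe_add, Finset.sort_eq, Finset.sort_eq, Finset.sort_eq,
      ← Finset.disjUnion_val A Aᶜ disjoint_compl_right, Finset.disjUnion_eq_union,
      Finset.union_compl]
  obtain ⟨n, hn⟩ := prod_map_eq_neg_one_pow_smul_of_perm (R := ℝ) hφ.ι_mul_ι_anticomm hperm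
    (hperm.symm.nodup (Finset.sort_nodup _ _))
  exact ⟨n, by rw [prodS, prodS, ← List.prod_append, ← List.map_append, hn, prodS]⟩

theorem prodS_univ_mul_ι (hm : Even m) (v : Fin m → ℝ) :
    prodS φ Finset.univ * ι (Qf m) v = -(ι (Qf m) v * prodS φ Finset.univ) := by
  have hbasis : ∀ i, prodS φ Finset.univ * ι (Qf m) (φ i) =
      -(ι (Qf m) (φ i) * prodS φ Finset.univ) := by
    intro i
    have hodd : Odd (m - 1) := Nat.Even.sub_odd i.pos hm odd_one
    have h := mul_prod_map_of_mem_of_anticomm (R := ℝ) hφ.ι_mul_ι_anticomm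
      (Finset.sort_nodup Finset.univ (· ≤ ·)) (Finset.mem_sort _ |>.mpr (Finset.mem_univ i))
    rw [Finset.length_sort, Finset.card_univ, Fintype.card_fin, hodd.neg_one_pow, neg_one_smul]
      at h
    rw [prodS, h, neg_neg]
  have hv : v ∈ Submodule.span ℝ (Set.range φ) := hφ.span_eq_top ▸ Submodule.mem_top
  induction hv using Submodule.span_induction with
  | mem x hx =>
    obtain ⟨i, rfl⟩ := hx
    exact hbasis i
  | zero => simp
  | add x y _ _ hx hy => rw [map_add, mul_add, add_mul, hx, hy, neg_add]
  | smul r x _ hx => rw [map_smul, mul_smul_comm, hx, smul_mul_assoc, smul_neg]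

theorem revConj_prodS_univ (hm : Even m) (a : Cl m) :
    revConj (prodS φ Finset.univ) a = involute a := by
  refine revConj_eq_involute_of_forall_ι_anticomm (hφ.prodS_univ_mul_ι hm) ?_ a
  rw [hφ.prodS_mul_reverse_prodS, Finset.card_univ, Fintype.card_fin, hm.neg_one_pow, one_smul]

theorem revConj_prodS_revConj_prodS (A : Finset (Fin m)) (a : Cl m) :
    revConj (prodS φ A) (revConj (prodS φ A) a) = a := by
  obtain ⟨n, hn⟩ := hφ.reverse_prodS_eq_neg_one_pow_smul A
  calc revConj (prodS φ A) (revConj (prodS φ A) a)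
      = revConj (prodS φ A) (revConj (reverse (prodS φ A)) a) := by
        rw [hn, revConj_neg_one_pow_smul]
    _ = a := by
        rw [← revConj_mul, hφ.prodS_mul_reverse_prodS, revConj_neg_one_pow_smul, revConj_one]

theorem revConj_prodS_compl (hm : Even m) (A : Finset (Fin m)) (a : Cl m) :
    revConj (prodS φ Aᶜ) a = revConj (prodS φ A) (involute a) := by
  obtain ⟨n, hn⟩ := hφ.prodS_mul_prodS_compl A
  calc revConj (prodS φ Aᶜ) a
      = revConj (prodS φ A) (revConj (prodS φ A * prodS φ Aᶜ) a) := by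
        rw [revConj_mul, hφ.revConj_prodS_revConj_prodS]
    _ = revConj (prodS φ A) (involute a) := by
        rw [hn, revConj_neg_one_pow_smul, hφ.revConj_prodS_univ hm]

theorem psiK_sub_eq_psiK_involute (hm : Even m) {j : ℕ} (hj : j ≤ m) (a : Cl m) :
    PsiK φ φ (m - j) a = PsiK φ φ j (involute a) := by
  simp only [PsiK, ← revConj_apply]
  refine Finset.sum_nbij' compl compl ?_ ?_ (fun B _ => compl_compl B) (fun A _ => compl_compl A) ?_
  · intro B hB
    simp only [Finset.mem_filter, Finset.mem_univ, true_and, Finset.card_compl,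
      Fintype.card_fin] at hB ⊢
    omega
  · intro A hA
    simp only [Finset.mem_filter, Finset.mem_univ, true_and, Finset.card_compl,
      Fintype.card_fin] at hA ⊢
    omega
  · intro B _
    rw [← hφ.revConj_prodS_compl hm, compl_compl]

end IsStructuralSet

theorem psiK_smul {m : ℕ} (φ ψ : Fin m → Fin m → ℝ) (j : ℕ) (r : ℝ) (a : Cl m) :
    PsiK φ ψ j (r • a) = r • PsiK φ ψ j a := by
  simp only [PsiK, Finset.smul_sum, mul_smul_comm, smul_mul_assoc]

theorem psiK_psiK_compl_even_dim_general {m j k : ℕ} (φ : Fin m → (Fin m → ℝ))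
    (hφ : IsStructuralSet φ) (hm : Even m) (hj : j ≤ m)
    (a : Cl m) (ha : a ∈ gradeK m k) :
    (Even k → PsiK φ φ j a = PsiK φ φ (m - j) a) ∧
      (Odd k → PsiK φ φ j a = -PsiK φ φ (m - j) a) := by
  have hcompl : PsiK φ φ (m - j) a = (-1 : ℝ) ^ k • PsiK φ φ j a := by
    rw [hφ.psiK_sub_eq_psiK_involute hm hj, involute_of_mem_gradeK ha, psiK_smul]
  refine ⟨fun hk => ?_, fun hk => ?_⟩
  · rw [hcompl, hk.neg_one_pow, one_smul]
  · rw [hcompl, hk.neg_one_pow, neg_one_smul, neg_neg]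

/-- for a structural set `φ` with `m` even and a `k`-grade multivector
`a`, `Ψⱼ^{φ,φ}(a) = Ψ_{m-j}^{φ,φ}(a)` if `k` is even, and `= -Ψ_{m-j}^{φ,φ}(a)` if
`k` is odd. -/
theorem psiK_psiK_compl_even_dim {m j k : ℕ} (φ : Fin m → (Fin m → ℝ))
    (hφ : IsStructuralSet φ) (hm : Even m) (hj : j ≤ m) (hk : k ≤ m)
    (a : Cl m) (ha : a ∈ gradeK m k) :
    (Even k → PsiK φ φ j a = PsiK φ φ (m - j) a) ∧
      (Odd k → PsiK φ φ j a = -PsiK φ φ (m - j) a) :=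
  psiK_psiK_compl_even_dim_general φ hφ hm hj a ha
end
end

section
/- Let φ be a structural set in ℝ_{0,m}. For every a ∈ ℝ_{0,m} and every j = 1,...,m, one has φʲ [Ψ₊^{φ,φ}(a)] φʲ = Ψ₋^{φ,φ}(a). -/
open CliffordAlgebra

noncomputable section

/-!
Left multiplication by `φʲ` sends `φ_A` to `±φ_{A ∆ {j}}`: move `φʲ` past the smaller
indices of `A`, picking up a sign at each, and either cancel it against `φʲ` (using
`(φʲ)² = -1`) or leave it in its sorted place. Taking reverses, right multiplication of
`φ̂_A` by `φʲ` gives the same sign, so conjugation by `φʲ` sends the term `φ_A a φ̂_A` to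
`φ_{A ∆ {j}} a φ̂_{A ∆ {j}}`. Since `A ↦ A ∆ {j}` is an involution exchanging even and odd
cardinalities, it turns `Ψ₊` into `Ψ₋`.
-/

open scoped symmDiff

theorem Finset.symmDiff_singleton_eq_ite {α : Type*} [DecidableEq α] (A : Finset α) (j : α) :
    A ∆ {j} = if j ∈ A then A.erase j else insert j A := by
  ext x
  split_ifs with hj <;> by_cases hx : x = j <;> simp_all [Finset.mem_symmDiff]

theorem Finset.even_card_symmDiff_singleton_iff {α : Type*} [DecidableEq α] (A : Finset α)
    (j : α) : Even (A ∆ {j}).card ↔ ¬Even A.card := by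
  rw [Finset.symmDiff_singleton_eq_ite]
  split_ifs with hj
  · rw [← Finset.card_erase_add_one hj, Nat.even_add_one, not_not]
  · rw [Finset.card_insert_of_notMem hj, Nat.even_add_one]

section SortedProd

variable {R M κ : Type*} [CommRing R] [AddCommGroup M] [Module R M] [LinearOrder κ]

def sortedProd (Q : QuadraticForm R M) (v : κ → M) (A : Finset κ) : CliffordAlgebra Q :=
  (A.sort.map fun i => ι Q (v i)).prod

variable {Q : QuadraticForm R M} {v : κ → M}

theorem sortedProd_insert_of_forall_lt {a : κ} {s : Finset κ} (ha : ∀ x ∈ s, a < x) :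
    sortedProd Q v (insert a s) = ι Q (v a) * sortedProd Q v s := by
  rw [sortedProd, sortedProd, Finset.sort_insert _ (fun x hx => (ha x hx).le)
    (fun h => lt_irrefl a (ha a h)), List.map_cons, List.prod_cons]

theorem ι_mul_sortedProd {j : κ} (hj : Q (v j) * Q (v j) = 1)
    (hortho : ∀ i ≠ j, Q.IsOrtho (v j) (v i)) (A : Finset κ) :
    ∃ ε : R, ε * ε = 1 ∧ ι Q (v j) * sortedProd Q v A = ε • sortedProd Q v (A ∆ {j}) := by
  induction A using Finset.induction_on_min with
  | empty =>
    refine ⟨1, one_mul 1, ?_⟩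
    rw [Finset.symmDiff_singleton_eq_ite, if_neg (Finset.notMem_empty j)]
    simp [sortedProd]
  | insert a s has ih =>
    have has' : a ∉ s := fun h => lt_irrefl a (has a h)
    rcases lt_trichotomy j a with hja | rfl | haj
    · refine ⟨1, one_mul 1, ?_⟩
      have hj_notMem : j ∉ insert a s := by
        simp only [Finset.mem_insert, not_or]
        exact ⟨hja.ne, fun h => (hja.trans (has j h)).false⟩
      rw [Finset.symmDiff_singleton_eq_ite, if_neg hj_notMem, one_smul,
        sortedProd_insert_of_forall_lt (a := j)]
      simp only [Finset.mem_insert, forall_eq_or_imp]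
      exact ⟨hja, fun x hx => hja.trans (has x hx)⟩
    · refine ⟨Q (v j), hj, ?_⟩
      rw [sortedProd_insert_of_forall_lt has, ← mul_assoc, ι_sq_scalar,
        Algebra.algebraMap_eq_smul_one, smul_mul_assoc, one_mul,
        Finset.symmDiff_singleton_eq_ite, if_pos (Finset.mem_insert_self _ _),
        Finset.erase_insert has']
    · obtain ⟨ε, hε, h⟩ := ih
      refine ⟨-ε, by rw [neg_mul_neg, hε], ?_⟩
      have hsymm : insert a s ∆ {j} = insert a (s ∆ {j}) := by
        ext x
        by_cases hx : x = j <;> by_cases hxa : x = a <;> simp_all [Finset.mem_symmDiff]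
      have hmin : ∀ x ∈ s ∆ {j}, a < x := by
        intro x hx
        rcases Finset.mem_symmDiff.mp hx with ⟨hxs, -⟩ | ⟨hxj, -⟩
        · exact has x hxs
        · rwa [Finset.mem_singleton.mp hxj]
      rw [sortedProd_insert_of_forall_lt has, ι_mul_ι_mul_of_isOrtho _ (hortho a haj.ne), h,
        hsymm, sortedProd_insert_of_forall_lt hmin, mul_smul_comm, neg_smul]

theorem ι_mul_sortedProd_mul_reverse_mul_ι {j : κ} (hj : Q (v j) * Q (v j) = 1)
    (hortho : ∀ i ≠ j, Q.IsOrtho (v j) (v i)) (A : Finset κ) (a : CliffordAlgebra Q) :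
    ι Q (v j) * (sortedProd Q v A * a * reverse (sortedProd Q v A)) * ι Q (v j) =
      sortedProd Q v (A ∆ {j}) * a * reverse (sortedProd Q v (A ∆ {j})) := by
  obtain ⟨ε, hε, h⟩ := ι_mul_sortedProd hj hortho A
  have hrev :
      reverse (sortedProd Q v A) * ι Q (v j) = ε • reverse (sortedProd Q v (A ∆ {j})) := by
    rw [← reverse_ι, ← reverse.map_mul, h, map_smul]
  calc ι Q (v j) * (sortedProd Q v A * a * reverse (sortedProd Q v A)) * ι Q (v j)
      = (ι Q (v j) * sortedProd Q v A) * a * (reverse (sortedProd Q v A) * ι Q (v j)) := by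
        simp only [mul_assoc]
    _ = (ε * ε) • (sortedProd Q v (A ∆ {j}) * a * reverse (sortedProd Q v (A ∆ {j}))) := by
        rw [h, hrev, smul_mul_assoc, smul_mul_assoc, mul_smul_comm, smul_smul]
    _ = _ := by rw [hε, one_smul]

end SortedProd

theorem Qf_apply {m : ℕ} (x : Fin m → ℝ) : Qf m x = -∑ t, x t * x t := by
  simp [QuadraticMap.weightedSumSquares_apply]

namespace IsStructuralSet

variable {m : ℕ} {φ : Fin m → Fin m → ℝ}

theorem qf_eq_neg_one (hφ : IsStructuralSet φ) (i : Fin m) : Qf m (φ i) = -1 := by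
  rw [Qf_apply, hφ i i, if_pos rfl]

theorem isOrtho (hφ : IsStructuralSet φ) {i j : Fin m} (hij : i ≠ j) :
    (Qf m).IsOrtho (φ i) (φ j) := by
  have hsq : ∑ t, (φ i t + φ j t) * (φ i t + φ j t) =
      ∑ t, φ i t * φ i t + 2 * ∑ t, φ i t * φ j t + ∑ t, φ j t * φ j t := by
    simp only [Finset.mul_sum, ← Finset.sum_add_distrib]
    exact Finset.sum_congr rfl fun t _ => by ring
  rw [QuadraticMap.isOrtho_def, Qf_apply, Qf_apply, Qf_apply]
  simp only [Pi.add_apply, hsq, hφ i j, if_neg hij]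
  ring

end IsStructuralSet

theorem prodS_eq_sortedProd {m : ℕ} (φ : Fin m → Fin m → ℝ) (A : Finset (Fin m)) :
    prodS φ A = sortedProd (Qf m) φ A :=
  rfl

theorem sum_filter_PsiK {m : ℕ} (φ ψ : Fin m → Fin m → ℝ) (a : Cl m) (p : ℕ → Prop)
    [DecidablePred p] :
    ∑ k ∈ (Finset.range (m + 1)).filter p, PsiK φ ψ k a =
      ∑ A with p A.card, prodS φ A * a * reverse (prodS ψ A) := by
  have hcard : ∀ A ∈ Finset.univ.filter (fun A : Finset (Fin m) => p A.card),
      A.card ∈ (Finset.range (m + 1)).filter p := by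
    intro A hA
    simp only [Finset.mem_filter, Finset.mem_univ, true_and, Finset.mem_range] at hA ⊢
    exact ⟨Nat.lt_succ_of_le (card_finset_fin_le A), hA⟩
  rw [← Finset.sum_fiberwise_of_maps_to hcard]
  refine Finset.sum_congr rfl fun k hk => ?_
  rw [PsiK, Finset.filter_filter]
  refine Finset.sum_congr (Finset.filter_congr fun A _ => ?_) fun _ _ => rfl
  exact ⟨fun h => ⟨h ▸ (Finset.mem_filter.mp hk).2, h⟩, fun h => h.2⟩

/-- for a structural set `φ`, `φʲ [Ψ₊^{φ,φ}(a)] φʲ = Ψ₋^{φ,φ}(a)`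
for every `a ∈ ℝ_{0,m}` and every `j`. -/
theorem conj_psiPlus_eq_psiMinus {m : ℕ} (φ : Fin m → (Fin m → ℝ))
    (hφ : IsStructuralSet φ) (a : Cl m) (j : Fin m) :
    ι (Qf m) (φ j) * PsiPlus φ φ a * ι (Qf m) (φ j) = PsiMinus φ φ a := by
  have hj : Qf m (φ j) * Qf m (φ j) = 1 := by rw [hφ.qf_eq_neg_one]; norm_num
  have hortho : ∀ i ≠ j, (Qf m).IsOrtho (φ j) (φ i) := fun i hi => hφ.isOrtho hi.symm
  rw [PsiPlus, PsiMinus, sum_filter_PsiK, sum_filter_PsiK, Finset.mul_sum, Finset.sum_mul]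
  simp only [prodS_eq_sortedProd]
  refine Finset.sum_nbij' (· ∆ {j}) (· ∆ {j}) ?_ ?_
    (fun A _ => symmDiff_symmDiff_cancel_right _ _) (fun A _ => symmDiff_symmDiff_cancel_right _ _)
    (fun A _ => ι_mul_sortedProd_mul_reverse_mul_ι hj hortho A a) <;>
  simp [← Nat.not_even_iff_odd, Finset.even_card_symmDiff_singleton_iff]
end
end
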